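/- arXiv:2601.13586 — 4 statements merged into one kernel-verified Lean document; each statement's English description precedes it below -/
import Mathlib

section
/- For every (i,k,ℓ) ∈ X_diff, D(i,k,ℓ) ≥ i·c′ + b′; that is, D is globally bounded below by the affine function i ↦ i·c′ + b′. -/
/-- Overall service rate `d(k,ℓ) = k·μ₁ + min(ℓ,C₂)·μ₂`. -/
noncomputable def dRate (C₂ : ℕ) (μ₁ μ₂ : ℝ) (k ℓ : ℕ) : ℝ :=
  (k : ℝ) * μ₁ + ((min ℓ C₂ : ℕ) : ℝ) * μ₂

/-- Membership of `(i,k,ℓ)` in the state space `X`. -/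
def memX (C₁ : ℕ) (i k ℓ : ℕ) : Prop :=
  (i = 0 ∧ k + ℓ < C₁) ∨ k + ℓ = C₁

/-- `v` satisfies the optimality (Bellman) equations of the clearing system.
Terms whose coefficient `k·μ₁` or `min(ℓ,C₂)·μ₂` vanishes contribute `0`,
matching the convention that such summands are omitted. -/
def IsValue (C₁ C₂ : ℕ) (μ₁ μ₂ h₀ h₁ h₂ : ℝ) (v : ℕ → ℕ → ℕ → ℝ) : Prop :=
  v 0 0 0 = 0 ∧
  (∀ k ℓ : ℕ, k + ℓ ≤ C₁ → ¬(k = 0 ∧ ℓ = 0) →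
    v 0 k ℓ = ((k : ℝ) * h₁ + (ℓ : ℝ) * h₂) / dRate C₂ μ₁ μ₂ k ℓ
      + ((k : ℝ) * μ₁ / dRate C₂ μ₁ μ₂ k ℓ) * v 0 (k - 1) ℓ
      + (((min ℓ C₂ : ℕ) : ℝ) * μ₂ / dRate C₂ μ₁ μ₂ k ℓ) * v 0 k (ℓ - 1)) ∧
  (∀ i k ℓ : ℕ, k + ℓ = C₁ →
    v (i + 1) k ℓ =
      (((i : ℝ) + 1) * h₀ + (k : ℝ) * h₁ + (ℓ : ℝ) * h₂) / dRate C₂ μ₁ μ₂ k ℓ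
      + ((k : ℝ) * μ₁ / dRate C₂ μ₁ μ₂ k ℓ) *
          min (v i k ℓ) (v i (k - 1) (ℓ + 1))
      + (((min ℓ C₂ : ℕ) : ℝ) * μ₂ / dRate C₂ μ₁ μ₂ k ℓ) *
          min (v i (k + 1) (ℓ - 1)) (v i k ℓ))

/-- The difference `D(i,k,ℓ) = v(i,k,ℓ) − v(i,k−1,ℓ+1)`. -/
noncomputable def Dv (v : ℕ → ℕ → ℕ → ℝ) (i k ℓ : ℕ) : ℝ :=
  v i k ℓ - v i (k - 1) (ℓ + 1)

/-!
At `i = 0` nothing is decided, and the optimality equations have the closed-form solution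
`v(0,k,ℓ) = k·h₁/μ₁ + Σ_{j ≤ ℓ} j·h₂/(min(j,C₂)·μ₂)`, so
`D(0,k,ℓ) = h₁/μ₁ − (ℓ+1)·h₂/(min(ℓ+1,C₂)·μ₂) ≥ b′`.
For `i ≥ 1` only states with `k + ℓ = C₁` exist, and we induct on `i`. The optimality equations at
`(i+1,k,ℓ)` and `(i+1,k−1,ℓ+1)` share the minimum `m = min(v(i,k,ℓ), v(i,k−1,ℓ+1))`. The induction
hypothesis places the two other minima at least `u = i·c′ + b′` above and below `m`. What remains
is a scalar inequality. After cancelling `u` against the holding costs, it becomes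
`((C₂−p′)N + p′h₀)/d′ ≤ ((C₂−p)N + p·h₀)/d + h₀/μ₂`, where `N = (i+1)h₀ + C₁h₂`,
`p = min(ℓ,C₂)` and `p′ = min(ℓ+1,C₂)`. This holds because `(C₂−p′)·d ≤ (C₂−p)·d′` (here
`C₂ ≤ C₁` is used) and `p′·μ₂ ≤ d′`.
-/

open Finset

theorem min_add_le_min_of_add_le {α : Type*} [LinearOrder α] [Add α] [AddRightMono α]
    {a b x t : α} (hab : b + t ≤ a) (hx : a + t ≤ x) : min a b + t ≤ min x a := by
  rw [← min_add_add_right]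
  exact min_le_min hx hab

theorem min_add_le_min_of_add_le' {α : Type*} [LinearOrder α] [Add α] [AddRightMono α]
    {a b y t : α} (hab : b + t ≤ a) (hy : y + t ≤ b) : min b y + t ≤ min a b := by
  rw [← min_add_add_right]
  exact min_le_min hab hy

theorem div_sub_div_le_of_mul_eq {d d' V V' m A A' α β γ δ P Q u : ℝ}
    (hd : d = α + β) (hd' : d' = γ + δ) (hdpos : 0 < d) (hd'pos : 0 < d')
    (hV : d * V = A + α * m + β * P) (hV' : d' * V' = A' + γ * Q + δ * m)
    (hP : β * (m + u) ≤ β * P) (hQ : γ * Q ≤ γ * (m - u)) :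
    (A + β * u) / d - (A' - γ * u) / d' ≤ V - V' := by
  have hlower : (A + β * u) / d ≤ V - m := by
    have : (V - m) * d = A + β * (P - m) := by rw [sub_mul, mul_comm V, hV, hd]; ring
    rw [div_le_iff₀ hdpos, this]
    linarith
  have hupper : V' - m ≤ (A' - γ * u) / d' := by
    have : (V' - m) * d' = A' - γ * (m - Q) := by rw [sub_mul, mul_comm V', hV', hd']; ring
    rw [le_div_iff₀ hd'pos, this]
    linarith
  linarith

theorem div_le_div_add_of_cross {C₂ p p' d d' μ₂ h₀ N : ℝ} (hN : 0 ≤ N) (hh₀ : 0 ≤ h₀)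
    (hp : 0 ≤ p) (hp' : 0 < p') (hd : 0 < d) (hμ₂ : 0 < μ₂) (hd' : p' * μ₂ ≤ d')
    (hcross : (C₂ - p') * d ≤ (C₂ - p) * d') :
    ((C₂ - p') * N + p' * h₀) / d' ≤ ((C₂ - p) * N + p * h₀) / d + h₀ / μ₂ := by
  have hd'pos : 0 < d' := (by positivity : 0 < p' * μ₂).trans_le hd'
  have hN' : (C₂ - p') * N / d' ≤ (C₂ - p) * N / d := by
    rw [div_le_div_iff₀ hd'pos hd]
    nlinarith [mul_le_mul_of_nonneg_right hcross hN]
  have hh₀' : p' * h₀ / d' ≤ h₀ / μ₂ := by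
    rw [div_le_div_iff₀ hd'pos hμ₂]
    nlinarith [mul_le_mul_of_nonneg_left hd' hh₀]
  have : 0 ≤ p * h₀ / d := by positivity
  rw [add_div, add_div]
  linarith

theorem dRate_pos {C₂ : ℕ} {μ₁ μ₂ : ℝ} (hC₂ : 1 ≤ C₂) (hμ₁ : 0 < μ₁) (hμ₂ : 0 < μ₂) {k ℓ : ℕ}
    (hkℓ : k ≠ 0 ∨ ℓ ≠ 0) : 0 < dRate C₂ μ₁ μ₂ k ℓ := by
  unfold dRate
  rcases hkℓ with hk | hℓ
  · have : (0 : ℝ) < k := by exact_mod_cast Nat.pos_of_ne_zero hk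
    positivity
  · have : (0 : ℝ) < (min ℓ C₂ : ℕ) := by exact_mod_cast lt_min (Nat.pos_of_ne_zero hℓ) hC₂
    positivity

theorem sub_min_mul_dRate_le {C₂ K ℓ : ℕ} {μ₁ μ₂ : ℝ} (hμ₁ : 0 < μ₁) (hμ₂ : 0 < μ₂)
    (hC : C₂ ≤ K + 1 + ℓ) :
    ((C₂ : ℝ) - (min (ℓ + 1) C₂ : ℕ)) * dRate C₂ μ₁ μ₂ (K + 1) ℓ
      ≤ ((C₂ : ℝ) - (min ℓ C₂ : ℕ)) * dRate C₂ μ₁ μ₂ K (ℓ + 1) := by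
  rcases le_or_gt C₂ ℓ with hℓ | hℓ
  · simp [min_eq_right hℓ, min_eq_right (hℓ.trans ℓ.le_succ)]
  · have hC' : (C₂ : ℝ) ≤ K + 1 + ℓ := by exact_mod_cast hC
    simp only [dRate, min_eq_left hℓ.le, min_eq_left (Nat.succ_le_of_lt hℓ)]
    push_cast
    nlinarith

/-- The bound `i·c′ + b′`. -/
noncomputable def affineBound (C₁ C₂ : ℕ) (μ₁ μ₂ h₀ h₁ h₂ : ℝ) (i : ℕ) : ℝ :=
  i * (-h₀ / (C₂ * μ₂)) + ((h₁ - h₂) / μ₁ - C₁ * h₂ / (C₂ * μ₂))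

theorem affineBound_succ_le_drift {C₁ C₂ : ℕ} {μ₁ μ₂ h₀ h₁ h₂ : ℝ} (hC₂ : 1 ≤ C₂)
    (hC : C₂ ≤ C₁) (hμ₁ : 0 < μ₁) (hμ₂ : 0 < μ₂) (hh₀ : 0 ≤ h₀) (hh₂ : 0 ≤ h₂) {i K ℓ : ℕ}
    (hkℓ : K + 1 + ℓ = C₁) :
    let u := affineBound C₁ C₂ μ₁ μ₂ h₀ h₁ h₂ i
    affineBound C₁ C₂ μ₁ μ₂ h₀ h₁ h₂ (i + 1)
      ≤ ((i + 1) * h₀ + (K + 1) * h₁ + ℓ * h₂ + (min ℓ C₂ : ℕ) * μ₂ * u)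
          / dRate C₂ μ₁ μ₂ (K + 1) ℓ
        - ((i + 1) * h₀ + K * h₁ + (ℓ + 1) * h₂ - K * μ₁ * u) / dRate C₂ μ₁ μ₂ K (ℓ + 1) := by
  intro u
  set p : ℝ := ((min ℓ C₂ : ℕ) : ℝ)
  set p' : ℝ := ((min (ℓ + 1) C₂ : ℕ) : ℝ)
  set d := dRate C₂ μ₁ μ₂ (K + 1) ℓ with hd
  set d' := dRate C₂ μ₁ μ₂ K (ℓ + 1)
  set N : ℝ := (i + 1) * h₀ + C₁ * h₂
  have hC₂pos : (0 : ℝ) < C₂ := by exact_mod_cast hC₂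
  have hp' : 0 < p' := Nat.cast_pos.mpr (lt_min ℓ.succ_pos hC₂)
  have hd_eq : d = (K + 1) * μ₁ + p * μ₂ := by rw [hd, dRate, Nat.cast_add_one]
  have hd'_eq : d' = K * μ₁ + p' * μ₂ := rfl
  have hdpos : 0 < d := by rw [hd_eq]; positivity
  have hC₁ : (C₁ : ℝ) = K + 1 + ℓ := by rw [← hkℓ]; push_cast; ring
  have hidentity : ((i + 1) * h₀ + (K + 1) * h₁ + ℓ * h₂ + p * μ₂ * u) / d
        - ((i + 1) * h₀ + K * h₁ + (ℓ + 1) * h₂ - K * μ₁ * u) / d'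
        - affineBound C₁ C₂ μ₁ μ₂ h₀ h₁ h₂ (i + 1)
      = (((C₂ - p) * N + p * h₀) / d - ((C₂ - p') * N + p' * h₀) / d' + h₀ / μ₂) / C₂ := by
    have hd'pos : 0 < d' := by rw [hd'_eq]; positivity
    simp only [u, N, affineBound, hC₁, Nat.cast_add_one]
    field_simp
    rw [hd_eq, hd'_eq]
    ring
  have hcross := div_le_div_add_of_cross (C₂ := C₂) (p := p) (p' := p') (d := d) (d' := d')
    (N := N) (by positivity) hh₀ (by positivity) hp' hdpos hμ₂
    (le_add_of_nonneg_left (by positivity)) (sub_min_mul_dRate_le hμ₁ hμ₂ (hkℓ ▸ hC))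
  rw [← sub_nonneg, hidentity]
  apply div_nonneg _ hC₂pos.le
  linarith

namespace IsValue

variable {C₁ C₂ : ℕ} {μ₁ μ₂ h₀ h₁ h₂ : ℝ} {v : ℕ → ℕ → ℕ → ℝ}

theorem dRate_mul_zero (hv : IsValue C₁ C₂ μ₁ μ₂ h₀ h₁ h₂ v) {k ℓ : ℕ} (hkℓ : k + ℓ ≤ C₁)
    (hne : ¬(k = 0 ∧ ℓ = 0)) (hd : dRate C₂ μ₁ μ₂ k ℓ ≠ 0) :
    dRate C₂ μ₁ μ₂ k ℓ * v 0 k ℓ = k * h₁ + ℓ * h₂ + k * μ₁ * v 0 (k - 1) ℓ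
      + (min ℓ C₂ : ℕ) * μ₂ * v 0 k (ℓ - 1) := by
  rw [hv.2.1 k ℓ hkℓ hne]
  field_simp

theorem dRate_mul_succ (hv : IsValue C₁ C₂ μ₁ μ₂ h₀ h₁ h₂ v) {i k ℓ : ℕ} (hkℓ : k + ℓ = C₁)
    (hd : dRate C₂ μ₁ μ₂ k ℓ ≠ 0) :
    dRate C₂ μ₁ μ₂ k ℓ * v (i + 1) k ℓ = (i + 1) * h₀ + k * h₁ + ℓ * h₂
      + k * μ₁ * min (v i k ℓ) (v i (k - 1) (ℓ + 1))
      + (min ℓ C₂ : ℕ) * μ₂ * min (v i (k + 1) (ℓ - 1)) (v i k ℓ) := by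
  rw [hv.2.2 i k ℓ hkℓ]
  field_simp

theorem eq_zero (hv : IsValue C₁ C₂ μ₁ μ₂ h₀ h₁ h₂ v) (hC₂ : 1 ≤ C₂) (hμ₁ : 0 < μ₁)
    (hμ₂ : 0 < μ₂) {k ℓ : ℕ} (hkℓ : k + ℓ ≤ C₁) :
    v 0 k ℓ = k * h₁ / μ₁ + ∑ j ∈ range ℓ, (j + 1) * h₂ / ((min (j + 1) C₂ : ℕ) * μ₂) := by
  set S : ℕ → ℝ := fun ℓ ↦ ∑ j ∈ range ℓ, (j + 1) * h₂ / ((min (j + 1) C₂ : ℕ) * μ₂)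
  change v 0 k ℓ = k * h₁ / μ₁ + S ℓ
  induction hn : k + ℓ generalizing k ℓ with
  | zero =>
    obtain ⟨rfl, rfl⟩ : k = 0 ∧ ℓ = 0 := by omega
    simp [hv.1, S]
  | succ n ih =>
    have hd := dRate_pos hC₂ hμ₁ hμ₂ (k := k) (ℓ := ℓ) (by omega)
    have hleft : k * μ₁ * v 0 (k - 1) ℓ = k * μ₁ * (k * h₁ / μ₁ + S ℓ) - k * h₁ := by
      rcases k with _ | K
      · simp
      · rw [ih (by omega) (by omega), Nat.add_sub_cancel]
        push_cast
        field_simp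
        ring
    have hright : (min ℓ C₂ : ℕ) * μ₂ * v 0 k (ℓ - 1)
        = (min ℓ C₂ : ℕ) * μ₂ * (k * h₁ / μ₁ + S ℓ) - ℓ * h₂ := by
      rcases ℓ with _ | L
      · simp
      · have : (0 : ℝ) < (min (L + 1) C₂ : ℕ) := by exact_mod_cast lt_min L.succ_pos hC₂
        have hS : S (L + 1) = S L + (L + 1) * h₂ / ((min (L + 1) C₂ : ℕ) * μ₂) := by
          simp only [S, sum_range_succ]
        rw [ih (by omega) (by omega), Nat.add_sub_cancel, hS]
        field_simp
        push_cast
        ring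
    have hbellman := hv.dRate_mul_zero hkℓ (by omega) hd.ne'
    rw [hleft, hright] at hbellman
    apply mul_left_cancel₀ hd.ne'
    rw [hbellman, dRate]
    ring

theorem affineBound_zero_le_Dv (hv : IsValue C₁ C₂ μ₁ μ₂ h₀ h₁ h₂ v) (hC₂ : 1 ≤ C₂)
    (hC : C₂ ≤ C₁) (hμ₁ : 0 < μ₁) (hμ₂ : 0 < μ₂) (hh₂ : 0 ≤ h₂) {K ℓ : ℕ}
    (hkℓ : K + 1 + ℓ ≤ C₁) :
    affineBound C₁ C₂ μ₁ μ₂ h₀ h₁ h₂ 0 ≤ Dv v 0 (K + 1) ℓ := by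
  have hp' : (0 : ℝ) < (min (ℓ + 1) C₂ : ℕ) := Nat.cast_pos.mpr (lt_min ℓ.succ_pos hC₂)
  have hD : Dv v 0 (K + 1) ℓ = h₁ / μ₁ - (ℓ + 1) * h₂ / ((min (ℓ + 1) C₂ : ℕ) * μ₂) := by
    rw [Dv, Nat.add_sub_cancel, hv.eq_zero hC₂ hμ₁ hμ₂ hkℓ,
      hv.eq_zero hC₂ hμ₁ hμ₂ (by omega), sum_range_succ]
    set S := ∑ j ∈ range ℓ, ((j : ℝ) + 1) * h₂ / ((min (j + 1) C₂ : ℕ) * μ₂)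
    push_cast
    field_simp
    ring
  have hmin : (ℓ + 1) * C₂ ≤ C₁ * min (ℓ + 1) C₂ := by
    rcases le_total (ℓ + 1) C₂ with h | h
    · rw [min_eq_left h, mul_comm]
      exact Nat.mul_le_mul_right _ hC
    · rw [min_eq_right h]
      exact Nat.mul_le_mul_right _ (by omega)
  have hratio : (ℓ + 1) * h₂ / ((min (ℓ + 1) C₂ : ℕ) * μ₂) ≤ C₁ * h₂ / (C₂ * μ₂) := by
    have : ((ℓ : ℝ) + 1) * C₂ ≤ C₁ * (min (ℓ + 1) C₂ : ℕ) := by exact_mod_cast hmin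
    rw [div_le_div_iff₀ (by positivity) (by positivity)]
    nlinarith [mul_le_mul_of_nonneg_right this (mul_nonneg hh₂ hμ₂.le)]
  have : 0 ≤ h₂ / μ₁ := by positivity
  simp only [affineBound, Nat.cast_zero, zero_mul, zero_add]
  rw [hD, sub_div]
  linarith

theorem affineBound_succ_le_Dv (hv : IsValue C₁ C₂ μ₁ μ₂ h₀ h₁ h₂ v) (hC₂ : 1 ≤ C₂)
    (hC : C₂ ≤ C₁) (hμ₁ : 0 < μ₁) (hμ₂ : 0 < μ₂) (hh₀ : 0 ≤ h₀) (hh₂ : 0 ≤ h₂) {i : ℕ}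
    (ih : ∀ k ℓ, k + ℓ = C₁ → 1 ≤ k → affineBound C₁ C₂ μ₁ μ₂ h₀ h₁ h₂ i ≤ Dv v i k ℓ)
    {K ℓ : ℕ} (hkℓ : K + 1 + ℓ = C₁) :
    affineBound C₁ C₂ μ₁ μ₂ h₀ h₁ h₂ (i + 1) ≤ Dv v (i + 1) (K + 1) ℓ := by
  set u := affineBound C₁ C₂ μ₁ μ₂ h₀ h₁ h₂ i
  have ih' : ∀ k ℓ, k + 1 + ℓ = C₁ → v i k (ℓ + 1) + u ≤ v i (k + 1) ℓ := fun k ℓ h ↦ by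
    have := ih (k + 1) ℓ h k.succ_pos
    rw [Dv, Nat.add_sub_cancel] at this
    linarith
  set m := min (v i (K + 1) ℓ) (v i K (ℓ + 1))
  have hab := ih' K ℓ hkℓ
  have hP : (min ℓ C₂ : ℕ) * μ₂ * (m + u)
      ≤ (min ℓ C₂ : ℕ) * μ₂ * min (v i (K + 1 + 1) (ℓ - 1)) (v i (K + 1) ℓ) := by
    rcases ℓ with _ | L
    · simp
    · exact mul_le_mul_of_nonneg_left
        (min_add_le_min_of_add_le hab (ih' (K + 1) L (by omega))) (by positivity)
  have hQ : K * μ₁ * min (v i K (ℓ + 1)) (v i (K - 1) (ℓ + 1 + 1)) ≤ K * μ₁ * (m - u) := by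
    rcases K with _ | K
    · simp
    · refine mul_le_mul_of_nonneg_left ?_ (by positivity)
      have := min_add_le_min_of_add_le' hab (ih' K (ℓ + 1) (by omega))
      rw [Nat.add_sub_cancel]
      linarith
  have hd := dRate_pos hC₂ hμ₁ hμ₂ (k := K + 1) (ℓ := ℓ) (Or.inl K.succ_ne_zero)
  have hd' := dRate_pos hC₂ hμ₁ hμ₂ (k := K) (ℓ := ℓ + 1) (Or.inr ℓ.succ_ne_zero)
  have hV := hv.dRate_mul_succ (i := i) hkℓ hd.ne'
  have hV' := hv.dRate_mul_succ (i := i) (k := K) (ℓ := ℓ + 1) (by omega) hd'.ne'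
  simp only [Nat.cast_add_one, Nat.add_sub_cancel] at hV hV'
  calc affineBound C₁ C₂ μ₁ μ₂ h₀ h₁ h₂ (i + 1)
      ≤ ((i + 1) * h₀ + (K + 1) * h₁ + ℓ * h₂ + (min ℓ C₂ : ℕ) * μ₂ * u)
          / dRate C₂ μ₁ μ₂ (K + 1) ℓ
        - ((i + 1) * h₀ + K * h₁ + (ℓ + 1) * h₂ - K * μ₁ * u) / dRate C₂ μ₁ μ₂ K (ℓ + 1) :=
        affineBound_succ_le_drift hC₂ hC hμ₁ hμ₂ hh₀ hh₂ hkℓ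
    _ ≤ v (i + 1) (K + 1) ℓ - v (i + 1) K (ℓ + 1) :=
        div_sub_div_le_of_mul_eq (by rw [dRate, Nat.cast_add_one]) rfl hd hd' hV hV' hP hQ
    _ = Dv v (i + 1) (K + 1) ℓ := by rw [Dv, Nat.add_sub_cancel]

theorem affineBound_le_Dv (hv : IsValue C₁ C₂ μ₁ μ₂ h₀ h₁ h₂ v) (hC₂ : 1 ≤ C₂)
    (hC : C₂ ≤ C₁) (hμ₁ : 0 < μ₁) (hμ₂ : 0 < μ₂) (hh₀ : 0 ≤ h₀) (hh₂ : 0 ≤ h₂) (i : ℕ) :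
    ∀ k ℓ, k + ℓ = C₁ → 1 ≤ k → affineBound C₁ C₂ μ₁ μ₂ h₀ h₁ h₂ i ≤ Dv v i k ℓ := by
  induction i with
  | zero =>
    intro k ℓ hkℓ hk
    obtain ⟨K, rfl⟩ : ∃ K, k = K + 1 := ⟨k - 1, by omega⟩
    exact hv.affineBound_zero_le_Dv hC₂ hC hμ₁ hμ₂ hh₂ hkℓ.le
  | succ i ih =>
    intro k ℓ hkℓ hk
    obtain ⟨K, rfl⟩ : ∃ K, k = K + 1 := ⟨k - 1, by omega⟩
    exact hv.affineBound_succ_le_Dv hC₂ hC hμ₁ hμ₂ hh₀ hh₂ ih hkℓ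

end IsValue

theorem stmt11_general
    (C₁ C₂ : ℕ) (hC₂pos : 1 ≤ C₂) (hC : C₂ < C₁)
    (μ₁ μ₂ h₀ h₁ h₂ : ℝ)
    (hμ₁ : 0 < μ₁) (hμ₂ : 0 < μ₂)
    (hh₀ : 0 < h₀) (hh₂ : 0 < h₂)
    (v : ℕ → ℕ → ℕ → ℝ) (hv : IsValue C₁ C₂ μ₁ μ₂ h₀ h₁ h₂ v)
 :
    ∀ i k ℓ : ℕ, memX C₁ i k ℓ → 1 ≤ k →
      (i : ℝ) * (-h₀ / ((C₂ : ℝ) * μ₂))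
          + ((h₁ - h₂) / μ₁ - (C₁ : ℝ) * h₂ / ((C₂ : ℝ) * μ₂)) ≤ Dv v i k ℓ := by
  intro i k ℓ hmem hk
  obtain ⟨K, rfl⟩ : ∃ K, k = K + 1 := ⟨k - 1, by omega⟩
  rcases hmem with ⟨rfl, hlt⟩ | heq
  · exact hv.affineBound_zero_le_Dv hC₂pos hC.le hμ₁ hμ₂ hh₂.le hlt.le
  · exact hv.affineBound_le_Dv hC₂pos hC.le hμ₁ hμ₂ hh₀.le hh₂.le i (K + 1) ℓ heq K.succ_pos

theorem stmt11
    (C₁ C₂ : ℕ) (hC₂pos : 1 ≤ C₂) (hC : C₂ < C₁)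
    (μ₁ μ₂ h₀ h₁ h₂ : ℝ)
    (hμ₁ : 0 < μ₁) (hμ₂ : 0 < μ₂)
    (hh₀ : 0 < h₀) (hh₁ : 0 < h₁) (hh₂ : 0 < h₂)
    (v : ℕ → ℕ → ℕ → ℝ) (hv : IsValue C₁ C₂ μ₁ μ₂ h₀ h₁ h₂ v)
 :
    ∀ i k ℓ : ℕ, memX C₁ i k ℓ → 1 ≤ k →
      (i : ℝ) * (-h₀ / ((C₂ : ℝ) * μ₂))
          + ((h₁ - h₂) / μ₁ - (C₁ : ℝ) * h₂ / ((C₂ : ℝ) * μ₂)) ≤ Dv v i k ℓ :=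
  stmt11_general C₁ C₂ hC₂pos hC μ₁ μ₂ h₀ h₁ h₂ hμ₁ hμ₂ hh₀ hh₂ v hv
end

section
/- For every k, ℓ with k + ℓ = C₁ and every i ≥ 0 (so that both (i,k,ℓ) and (i+1,k,ℓ) lie in the state space X), one has v(i+1,k,ℓ) − v(i,k,ℓ) ≥ 0; that is, the value function is non-decreasing in the queue length i. -/
set_option maxHeartbeats 1000000 in
lemma stmt12_dpos (C₂ : ℕ) (hC₂pos : 1 ≤ C₂) (μ₁ μ₂ : ℝ)
    (hμ₁ : 0 < μ₁) (hμ₂ : 0 < μ₂) :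
    ∀ k ℓ : ℕ, 1 ≤ k + ℓ → 0 < dRate C₂ μ₁ μ₂ k ℓ := by
  intro k ℓ h
  unfold dRate
  rcases Nat.eq_zero_or_pos k with hk | hk
  · have h1 : 1 ≤ min ℓ C₂ := by omega
    have h1' : (1:ℝ) ≤ ((min ℓ C₂ : ℕ) : ℝ) := by exact_mod_cast h1
    have hk' : ((k:ℕ):ℝ) = 0 := by simp [hk]
    nlinarith
  · have h1 : (1:ℝ) ≤ (k:ℝ) := by exact_mod_cast hk
    have h2 : (0:ℝ) ≤ ((min ℓ C₂ : ℕ) : ℝ) := by positivity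
    nlinarith

set_option maxHeartbeats 1000000 in
lemma stmt12_mono
    (C₁ C₂ : ℕ) (hC₂pos : 1 ≤ C₂) (hC : C₂ < C₁)
    (μ₁ μ₂ h₀ h₁ h₂ : ℝ)
    (hμ₁ : 0 < μ₁) (hμ₂ : 0 < μ₂)
    (hh₀ : 0 < h₀) (hh₁ : 0 < h₁) (hh₂ : 0 < h₂)
    (v : ℕ → ℕ → ℕ → ℝ) (hv : IsValue C₁ C₂ μ₁ μ₂ h₀ h₁ h₂ v) :
    ∀ n, ∀ k ℓ : ℕ, k + ℓ = n → n ≤ C₁ →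
      (1 ≤ k → v 0 (k - 1) ℓ ≤ v 0 k ℓ) ∧ (1 ≤ ℓ → v 0 k (ℓ - 1) ≤ v 0 k ℓ) := by
  have hdpos := stmt12_dpos C₂ hC₂pos μ₁ μ₂ hμ₁ hμ₂
  obtain ⟨hv0, hvB, hvQ⟩ := hv
  intro n
  induction n using Nat.strong_induction_on with
  | _ n IH =>
    intro k ℓ hn hnC
    have key1 : (k:ℕ) + ℓ = n := hn
    constructor
    · -- decreasing k
      intro hk
      have hne : ¬(k = 0 ∧ ℓ = 0) := by omega
      have hd := hdpos k ℓ (by omega)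
      have hd0 : dRate C₂ μ₁ μ₂ k ℓ ≠ 0 := ne_of_gt hd
      have eq1 := hvB k ℓ (by omega) hne
      have E1 : dRate C₂ μ₁ μ₂ k ℓ * v 0 k ℓ =
          ((k:ℝ)*h₁ + (ℓ:ℝ)*h₂) + (k:ℝ)*μ₁ * v 0 (k-1) ℓ
            + ((min ℓ C₂ : ℕ):ℝ)*μ₂ * v 0 k (ℓ-1) := by
        rw [eq1]; field_simp
      rcases Nat.eq_zero_or_pos ℓ with hℓ | hℓ
      · -- ℓ = 0
        subst hℓ
        have hM : ((min 0 C₂ : ℕ):ℝ) = 0 := by norm_num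
        have hK : (1:ℝ) ≤ (k:ℝ) := by exact_mod_cast hk
        have hdr : dRate C₂ μ₁ μ₂ k 0 = (k:ℝ)*μ₁ + ((min 0 C₂ : ℕ):ℝ)*μ₂ := rfl
        rw [hdr, hM] at E1
        have hkm : (0:ℝ) < (k:ℝ)*μ₁ := by nlinarith
        nlinarith [E1, hkm, hh₁]
      · -- ℓ ≥ 1
        have hne2 : ¬(k - 1 = 0 ∧ ℓ = 0) := by omega
        have hd2 := hdpos (k-1) ℓ (by omega)
        have hd20 : dRate C₂ μ₁ μ₂ (k-1) ℓ ≠ 0 := ne_of_gt hd2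
        have eq2 := hvB (k-1) ℓ (by omega) hne2
        have E2 : dRate C₂ μ₁ μ₂ (k-1) ℓ * v 0 (k-1) ℓ =
            (((k-1:ℕ):ℝ)*h₁ + (ℓ:ℝ)*h₂) + ((k-1:ℕ):ℝ)*μ₁ * v 0 (k-1-1) ℓ
              + ((min ℓ C₂ : ℕ):ℝ)*μ₂ * v 0 (k-1) (ℓ-1) := by
          rw [eq2]; field_simp
        have hK : ((k - 1 : ℕ) : ℝ) = (k:ℝ) - 1 := by
          have := Nat.cast_sub (R := ℝ) hk; simpa using this
        have hdr1 : dRate C₂ μ₁ μ₂ k ℓ = (k:ℝ)*μ₁ + ((min ℓ C₂ : ℕ):ℝ)*μ₂ := rfl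
        have hdr2 : dRate C₂ μ₁ μ₂ (k-1) ℓ
            = ((k-1:ℕ):ℝ)*μ₁ + ((min ℓ C₂ : ℕ):ℝ)*μ₂ := rfl
        rw [hdr1] at E1
        rw [hdr2, hK] at E2
        have key : ((k:ℝ)*μ₁ + ((min ℓ C₂ : ℕ):ℝ)*μ₂) * (v 0 k ℓ - v 0 (k-1) ℓ)
            = h₁ + ((k:ℝ)-1)*μ₁*(v 0 (k-1) ℓ - v 0 (k-1-1) ℓ)
              + ((min ℓ C₂ : ℕ):ℝ)*μ₂*(v 0 k (ℓ-1) - v 0 (k-1) (ℓ-1)) := by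
          linear_combination E1 - E2
        have t1 : 0 ≤ ((k:ℝ)-1)*μ₁*(v 0 (k-1) ℓ - v 0 (k-1-1) ℓ) := by
          rcases eq_or_lt_of_le hk with h1 | h1
          · have : (k:ℝ) = 1 := by exact_mod_cast h1.symm
            rw [this]; norm_num
          · have hk2 : 2 ≤ k := h1
            have hIH := (IH (n-1) (by omega) (k-1) ℓ (by omega) (by omega)).1 (by omega)
            have h0 : (0:ℝ) ≤ (k:ℝ)-1 := by
              have : (2:ℝ) ≤ (k:ℝ) := by exact_mod_cast hk2
              linarith
            exact mul_nonneg (mul_nonneg h0 hμ₁.le) (sub_nonneg.mpr hIH)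
        have t2 : 0 ≤ ((min ℓ C₂ : ℕ):ℝ)*μ₂*(v 0 k (ℓ-1) - v 0 (k-1) (ℓ-1)) := by
          have hIH := (IH (n-1) (by omega) k (ℓ-1) (by omega) (by omega)).1 hk
          exact mul_nonneg (mul_nonneg (by positivity) hμ₂.le) (sub_nonneg.mpr hIH)
        rw [hdr1] at hd
        have hpos : 0 < ((k:ℝ)*μ₁ + ((min ℓ C₂ : ℕ):ℝ)*μ₂) * (v 0 k ℓ - v 0 (k-1) ℓ) := by
          rw [key]; linarith
        rcases mul_pos_iff.mp hpos with ⟨_, h5⟩ | ⟨h4, _⟩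
        · linarith
        · linarith
    · -- decreasing ℓ
      intro hℓ
      have hne : ¬(k = 0 ∧ ℓ = 0) := by omega
      have hd := hdpos k ℓ (by omega)
      have hd0 : dRate C₂ μ₁ μ₂ k ℓ ≠ 0 := ne_of_gt hd
      have eq1 := hvB k ℓ (by omega) hne
      have E1 : dRate C₂ μ₁ μ₂ k ℓ * v 0 k ℓ =
          ((k:ℝ)*h₁ + (ℓ:ℝ)*h₂) + (k:ℝ)*μ₁ * v 0 (k-1) ℓ
            + ((min ℓ C₂ : ℕ):ℝ)*μ₂ * v 0 k (ℓ-1) := by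
        rw [eq1]; field_simp
      have hdr1 : dRate C₂ μ₁ μ₂ k ℓ = (k:ℝ)*μ₁ + ((min ℓ C₂ : ℕ):ℝ)*μ₂ := rfl
      by_cases hsp : k = 0 ∧ ℓ = 1
      · -- special state (0,1)
        obtain ⟨hk0, hℓ1⟩ := hsp
        subst hk0; subst hℓ1
        have hmin : min 1 C₂ = 1 := by omega
        rw [hdr1] at E1 hd
        rw [hmin] at E1 hd
        simp only [Nat.cast_zero, Nat.cast_one] at E1 hd
        have h00 : v 0 0 (1-1) = 0 := hv0
        rw [h00]
        rw [show (1:ℕ) - 1 = 0 from rfl] at E1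
        rw [hv0] at E1
        nlinarith [E1, hd, hh₂]
      · -- general case
        have hne2 : ¬(k = 0 ∧ ℓ - 1 = 0) := by omega
        have hd2 := hdpos k (ℓ-1) (by omega)
        have hd20 : dRate C₂ μ₁ μ₂ k (ℓ-1) ≠ 0 := ne_of_gt hd2
        have eq2 := hvB k (ℓ-1) (by omega) hne2
        have E2 : dRate C₂ μ₁ μ₂ k (ℓ-1) * v 0 k (ℓ-1) =
            ((k:ℝ)*h₁ + ((ℓ-1:ℕ):ℝ)*h₂) + (k:ℝ)*μ₁ * v 0 (k-1) (ℓ-1)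
              + ((min (ℓ-1) C₂ : ℕ):ℝ)*μ₂ * v 0 k (ℓ-1-1) := by
          rw [eq2]; field_simp
        have hL : ((ℓ - 1 : ℕ) : ℝ) = (ℓ:ℝ) - 1 := by
          have := Nat.cast_sub (R := ℝ) hℓ; simpa using this
        have hdr2 : dRate C₂ μ₁ μ₂ k (ℓ-1)
            = (k:ℝ)*μ₁ + ((min (ℓ-1) C₂ : ℕ):ℝ)*μ₂ := rfl
        rw [hdr1] at E1
        rw [hdr2, hL] at E2
        have key : ((k:ℝ)*μ₁ + ((min ℓ C₂ : ℕ):ℝ)*μ₂) * (v 0 k ℓ - v 0 k (ℓ-1))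
            = h₂ + (k:ℝ)*μ₁*(v 0 (k-1) ℓ - v 0 (k-1) (ℓ-1))
              + ((min (ℓ-1) C₂ : ℕ):ℝ)*μ₂*(v 0 k (ℓ-1) - v 0 k (ℓ-1-1)) := by
          linear_combination E1 - E2
        have t1 : 0 ≤ (k:ℝ)*μ₁*(v 0 (k-1) ℓ - v 0 (k-1) (ℓ-1)) := by
          rcases Nat.eq_zero_or_pos k with hk0 | hk0
          · subst hk0; simp
          · have hIH := (IH (n-1) (by omega) (k-1) ℓ (by omega) (by omega)).2 hℓ
            exact mul_nonneg (mul_nonneg (by positivity) hμ₁.le) (sub_nonneg.mpr hIH)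
        have t2 : 0 ≤ ((min (ℓ-1) C₂ : ℕ):ℝ)*μ₂*(v 0 k (ℓ-1) - v 0 k (ℓ-1-1)) := by
          rcases Nat.lt_or_ge ℓ 2 with hℓ2 | hℓ2
          · have : ℓ = 1 := by omega
            subst this
            simp
          · have hIH := (IH (n-1) (by omega) k (ℓ-1) (by omega) (by omega)).2 (by omega)
            exact mul_nonneg (mul_nonneg (by positivity) hμ₂.le) (sub_nonneg.mpr hIH)
        rw [hdr1] at hd
        have hpos : 0 < ((k:ℝ)*μ₁ + ((min ℓ C₂ : ℕ):ℝ)*μ₂) * (v 0 k ℓ - v 0 k (ℓ-1)) := by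
          rw [key]; linarith
        rcases mul_pos_iff.mp hpos with ⟨_, h5⟩ | ⟨h4, _⟩
        · linarith
        · linarith

set_option maxHeartbeats 1000000 in
theorem stmt12
    (C₁ C₂ : ℕ) (hC₂pos : 1 ≤ C₂) (hC : C₂ < C₁)
    (μ₁ μ₂ h₀ h₁ h₂ : ℝ)
    (hμ₁ : 0 < μ₁) (hμ₂ : 0 < μ₂)
    (hh₀ : 0 < h₀) (hh₁ : 0 < h₁) (hh₂ : 0 < h₂)
    (v : ℕ → ℕ → ℕ → ℝ) (hv : IsValue C₁ C₂ μ₁ μ₂ h₀ h₁ h₂ v)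
 :
    ∀ i k ℓ : ℕ, k + ℓ = C₁ → 0 ≤ v (i + 1) k ℓ - v i k ℓ := by
  have hdpos := stmt12_dpos C₂ hC₂pos μ₁ μ₂ hμ₁ hμ₂
  have mono := stmt12_mono C₁ C₂ hC₂pos hC μ₁ μ₂ h₀ h₁ h₂ hμ₁ hμ₂ hh₀ hh₁ hh₂ v hv
  obtain ⟨hv0, hvB, hvQ⟩ := hv
  -- main induction on i
  have main : ∀ i, ∀ k ℓ : ℕ, k + ℓ = C₁ → v i k ℓ ≤ v (i+1) k ℓ := by
    intro i
    induction i with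
    | zero =>
      intro k ℓ hkl
      have hd := hdpos k ℓ (by omega)
      have eqQ := hvQ 0 k ℓ hkl
      have eqB := hvB k ℓ (le_of_eq hkl) (by omega)
      have h0 : ((k:ℝ)*h₁ + (ℓ:ℝ)*h₂) / dRate C₂ μ₁ μ₂ k ℓ
          ≤ ((((0:ℕ):ℝ)+1)*h₀ + (k:ℝ)*h₁ + (ℓ:ℝ)*h₂) / dRate C₂ μ₁ μ₂ k ℓ := by
        rw [div_eq_mul_inv, div_eq_mul_inv]
        apply mul_le_mul_of_nonneg_right _ (inv_nonneg.mpr hd.le)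
        push_cast
        nlinarith [hh₀]
      have h1 : ((k:ℝ)*μ₁ / dRate C₂ μ₁ μ₂ k ℓ) * v 0 (k-1) ℓ
          ≤ ((k:ℝ)*μ₁ / dRate C₂ μ₁ μ₂ k ℓ) *
              min (v 0 k ℓ) (v 0 (k-1) (ℓ+1)) := by
        rcases Nat.eq_zero_or_pos k with hk | hk
        · subst hk; simp
        · apply mul_le_mul_of_nonneg_left _ (div_nonneg (by positivity) hd.le)
          refine le_min ((mono C₁ k ℓ hkl le_rfl).1 hk) ?_
          have h2 := (mono C₁ (k-1) (ℓ+1) (by omega) le_rfl).2 (by omega)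
          simpa using h2
      have h2 : (((min ℓ C₂ : ℕ):ℝ)*μ₂ / dRate C₂ μ₁ μ₂ k ℓ) * v 0 k (ℓ-1)
          ≤ (((min ℓ C₂ : ℕ):ℝ)*μ₂ / dRate C₂ μ₁ μ₂ k ℓ) *
              min (v 0 (k+1) (ℓ-1)) (v 0 k ℓ) := by
        rcases Nat.eq_zero_or_pos ℓ with hℓ | hℓ
        · subst hℓ; simp
        · apply mul_le_mul_of_nonneg_left _ (div_nonneg (by positivity) hd.le)
          refine le_min ?_ ((mono C₁ k ℓ hkl le_rfl).2 hℓ)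
          have h3 := (mono C₁ (k+1) (ℓ-1) (by omega) le_rfl).1 (by omega)
          simpa using h3
      calc v 0 k ℓ = _ := eqB
        _ ≤ _ := add_le_add (add_le_add h0 h1) h2
        _ = v 1 k ℓ := eqQ.symm
    | succ i IH =>
      intro k ℓ hkl
      have hd := hdpos k ℓ (by omega)
      have eqQ1 := hvQ i k ℓ hkl
      have eqQ2 := hvQ (i+1) k ℓ hkl
      have h0 : (((i:ℝ)+1)*h₀ + (k:ℝ)*h₁ + (ℓ:ℝ)*h₂) / dRate C₂ μ₁ μ₂ k ℓ
          ≤ ((((i+1:ℕ):ℝ)+1)*h₀ + (k:ℝ)*h₁ + (ℓ:ℝ)*h₂) / dRate C₂ μ₁ μ₂ k ℓ := by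
        rw [div_eq_mul_inv, div_eq_mul_inv]
        apply mul_le_mul_of_nonneg_right _ (inv_nonneg.mpr hd.le)
        push_cast
        nlinarith [hh₀]
      have h1 : ((k:ℝ)*μ₁ / dRate C₂ μ₁ μ₂ k ℓ) * min (v i k ℓ) (v i (k-1) (ℓ+1))
          ≤ ((k:ℝ)*μ₁ / dRate C₂ μ₁ μ₂ k ℓ) *
              min (v (i+1) k ℓ) (v (i+1) (k-1) (ℓ+1)) := by
        rcases Nat.eq_zero_or_pos k with hk | hk
        · subst hk; simp
        · apply mul_le_mul_of_nonneg_left _ (div_nonneg (by positivity) hd.le)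
          exact min_le_min (IH k ℓ hkl) (IH (k-1) (ℓ+1) (by omega))
      have h2 : (((min ℓ C₂ : ℕ):ℝ)*μ₂ / dRate C₂ μ₁ μ₂ k ℓ) *
              min (v i (k+1) (ℓ-1)) (v i k ℓ)
          ≤ (((min ℓ C₂ : ℕ):ℝ)*μ₂ / dRate C₂ μ₁ μ₂ k ℓ) *
              min (v (i+1) (k+1) (ℓ-1)) (v (i+1) k ℓ) := by
        rcases Nat.eq_zero_or_pos ℓ with hℓ | hℓ
        · subst hℓ; simp
        · apply mul_le_mul_of_nonneg_left _ (div_nonneg (by positivity) hd.le)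
          exact min_le_min (IH (k+1) (ℓ-1) (by omega)) (IH k ℓ hkl)
      calc v (i+1) k ℓ = _ := eqQ1
        _ ≤ _ := add_le_add (add_le_add h0 h1) h2
        _ = v (i+1+1) k ℓ := eqQ2.symm
  intro i k ℓ hkl
  exact sub_nonneg.mpr (main i k ℓ hkl)
end

section
/- Assume μ₁ > μ₂. Then for every (i,k,ℓ) ∈ X̃_diff, if D(i,k,ℓ) ≥ 0 then D(i,k,ℓ) ≤ (i − y_k)·c + b. -/
lemma mul_min_add_mul_min_sub_le {p₁ p₂ q₁ q₂ a a' a'' w : ℝ} (hp₂ : 0 ≤ p₂) (hq₁ : 0 ≤ q₁)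
    (hp : p₁ + p₂ = 1) (hq : q₁ + q₂ = 1) :
    p₁ * min a a' + p₂ * min w a - (q₁ * min a' a'' + q₂ * min a a')
      ≤ p₂ * max (a - a') 0 + q₁ * max (a' - a'') 0 := by
  have h₁ : a - min a a' ≤ max (a - a') 0 := by
    rcases le_total a a' with h | h <;> simp [h]
  have h₂ : min a a' - min a' a'' ≤ max (a' - a'') 0 := by
    rcases le_total a' a'' with h | h <;> simp [h]
  have hw := mul_le_mul_of_nonneg_left (min_le_right w a) hp₂
  linear_combination hw + mul_le_mul_of_nonneg_left h₁ hp₂ + mul_le_mul_of_nonneg_left h₂ hq₁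
    + min a a' * (hp - hq)

/-- `S` and `S'` stand for the numbers `min ℓ C₂` and `min (ℓ + 1) C₂` of busy class-2 servers
before and after one job moves from class 1 to class 2. -/
def BusyShift (L S S' : ℝ) : Prop :=
  (0 ≤ L ∧ S = L ∧ S' = L + 1) ∨ (1 ≤ S ∧ S ≤ L ∧ S' = S)

lemma mul_one_div_sub_one_div_nonpos {μ₁ μ₂ h₀ : ℝ} (hμ₂ : 0 < μ₂) (hμ : μ₂ < μ₁)
    (hh₀ : 0 ≤ h₀) {M : ℝ} (hM : 0 ≤ M) : h₀ / M * (1 / μ₁ - 1 / μ₂) ≤ 0 :=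
  mul_nonpos_of_nonneg_of_nonpos (div_nonneg hh₀ hM)
    (sub_nonpos.2 (one_div_le_one_div_of_le hμ₂ hμ.le))

lemma rate_mul_sub_mul {μ₁ μ₂ K S S' d d' : ℝ} (hd : d = K * μ₁ + S * μ₂)
    (hd' : d' = (K - 1) * μ₁ + S' * μ₂) :
    K * d' - (K - 1) * d = μ₂ * (K * S' - (K - 1) * S) := by
  subst hd hd'; ring

namespace BusyShift

variable {μ₁ μ₂ h₀ h₁ h₂ K L S S' d d' : ℝ}

lemma nonneg (hS : BusyShift L S S') : 0 ≤ S := by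
  rcases hS with ⟨hL, rfl, -⟩ | ⟨h1, -, -⟩ <;> linarith

lemma one_le_right (hS : BusyShift L S S') : 1 ≤ S' := by
  rcases hS with ⟨hL, -, rfl⟩ | ⟨h1, -, rfl⟩ <;> linarith

lemma rate_pos (hμ₁ : 0 < μ₁) (hμ₂ : 0 < μ₂) (hK : 1 ≤ K) (hS : BusyShift L S S')
    (hd : d = K * μ₁ + S * μ₂) : 0 < d := by
  have := hS.nonneg
  rw [hd]; nlinarith

lemma rate_pos' (hμ₁ : 0 < μ₁) (hμ₂ : 0 < μ₂) (hK : 1 ≤ K) (hS : BusyShift L S S')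
    (hd' : d' = (K - 1) * μ₁ + S' * μ₂) : 0 < d' := by
  have := hS.one_le_right
  rw [hd']; nlinarith

lemma rate_lt (hμ₁ : 0 < μ₁) (hμ : μ₂ < μ₁) (hS : BusyShift L S S') (hd : d = K * μ₁ + S * μ₂)
    (hd' : d' = (K - 1) * μ₁ + S' * μ₂) : d' < d := by
  rcases hS with ⟨-, rfl, rfl⟩ | ⟨-, -, rfl⟩ <;> subst hd hd' <;> linarith

lemma rate_le_add (hμ₂ : 0 < μ₂) (hS : BusyShift L S S') (hd : d = K * μ₁ + S * μ₂)
    (hd' : d' = (K - 1) * μ₁ + S' * μ₂) : d ≤ d' + μ₁ := by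
  rcases hS with ⟨-, rfl, rfl⟩ | ⟨-, -, rfl⟩ <;> subst hd hd' <;> linarith

lemma one_le_mul_sub_mul (hK : 1 ≤ K) (hS : BusyShift L S S') : 1 ≤ K * S' - (K - 1) * S := by
  rcases hS with ⟨hL, rfl, rfl⟩ | ⟨h1, -, rfl⟩ <;> nlinarith

lemma div_lt_div (hμ₁ : 0 < μ₁) (hμ₂ : 0 < μ₂) (hK : 1 ≤ K) (hS : BusyShift L S S')
    (hd : d = K * μ₁ + S * μ₂) (hd' : d' = (K - 1) * μ₁ + S' * μ₂) :
    (K - 1) * μ₁ / d' < K * μ₁ / d := by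
  have hd'0 := hS.rate_pos' hμ₁ hμ₂ hK hd'
  have hd0 : 0 < d := hS.rate_pos hμ₁ hμ₂ hK hd
  rw [div_lt_div_iff₀ hd'0 hd0]
  nlinarith [rate_mul_sub_mul hd hd', hS.one_le_mul_sub_mul hK, mul_pos hμ₁ hμ₂]

lemma service_cost_div_sub_le (hμ₁ : 0 < μ₁) (hμ₂ : 0 < μ₂) (hh₂ : 0 ≤ h₂) (hK : 1 ≤ K)
    (hS : BusyShift L S S') (hd : d = K * μ₁ + S * μ₂) (hd' : d' = (K - 1) * μ₁ + S' * μ₂) :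
    (K * h₁ + L * h₂) / d - ((K - 1) * h₁ + (L + 1) * h₂) / d'
      ≤ (K * μ₁ / d - (K - 1) * μ₁ / d') * (h₁ / μ₁ - h₂ / μ₂) := by
  have hd'0 := hS.rate_pos' hμ₁ hμ₂ hK hd'
  have hd0 : 0 < d := hS.rate_pos hμ₁ hμ₂ hK hd
  have key : (K * μ₁ / d - (K - 1) * μ₁ / d') * (h₁ / μ₁ - h₂ / μ₂)
      - ((K * h₁ + L * h₂) / d - ((K - 1) * h₁ + (L + 1) * h₂) / d')
      = h₂ * ((L + 1) * d - L * d' - μ₁ * (K * S' - (K - 1) * S)) / (d * d') := by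
    have := rate_mul_sub_mul hd hd'
    field_simp
    linear_combination (-(h₂ * μ₁)) * this
  rw [← sub_nonneg, key]
  refine div_nonneg (mul_nonneg hh₂ ?_) (by positivity)
  rcases hS with ⟨-, rfl, rfl⟩ | ⟨-, hSL, rfl⟩ <;> subst hd hd' <;> nlinarith

lemma waiting_cost_div_sub_le (hμ₁ : 0 < μ₁) (hμ₂ : 0 < μ₂) (hh₀ : 0 ≤ h₀) (hK : 1 ≤ K)
    (hS : BusyShift L S S') (hd : d = K * μ₁ + S * μ₂) (hd' : d' = (K - 1) * μ₁ + S' * μ₂) :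
    h₀ * (1 / d - 1 / d')
      ≤ (K * μ₁ / d - (K - 1) * μ₁ / d') * (h₀ / (K + L) * (1 / μ₁ - 1 / μ₂)) := by
  have hd'0 := hS.rate_pos' hμ₁ hμ₂ hK hd'
  have hd0 : 0 < d := hS.rate_pos hμ₁ hμ₂ hK hd
  have hKL : 0 < K + L := by rcases hS with ⟨hL, -⟩ | ⟨h1, hSL, -⟩ <;> linarith
  have key : (K * μ₁ / d - (K - 1) * μ₁ / d') * (h₀ / (K + L) * (1 / μ₁ - 1 / μ₂))
      - h₀ * (1 / d - 1 / d')
      = h₀ * ((K + L) * (d - d') - (μ₁ - μ₂) * (K * S' - (K - 1) * S)) / ((K + L) * d * d') := by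
    have := rate_mul_sub_mul hd hd'
    field_simp
    linear_combination (h₀ * (μ₂ - μ₁)) * this
  rw [← sub_nonneg, key]
  refine div_nonneg (mul_nonneg hh₀ ?_) (by positivity)
  rcases hS with ⟨hL, rfl, rfl⟩ | ⟨h1, hSL, rfl⟩ <;> subst hd hd' <;> nlinarith

lemma cost_div_sub_le (hμ₁ : 0 < μ₁) (hμ₂ : 0 < μ₂) (hh₀ : 0 ≤ h₀) (hh₂ : 0 ≤ h₂)
    (hK : 1 ≤ K) (hS : BusyShift L S S') (hd : d = K * μ₁ + S * μ₂)
    (hd' : d' = (K - 1) * μ₁ + S' * μ₂) {x : ℝ} (hx : 0 ≤ x) :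
    (x * h₀ + K * h₁ + L * h₂) / d - (x * h₀ + (K - 1) * h₁ + (L + 1) * h₂) / d'
      ≤ (K * μ₁ / d - (K - 1) * μ₁ / d')
          * (x * (h₀ / (K + L) * (1 / μ₁ - 1 / μ₂)) + (h₁ / μ₁ - h₂ / μ₂)) := by
  have h₀part := mul_le_mul_of_nonneg_left (hS.waiting_cost_div_sub_le hμ₁ hμ₂ hh₀ hK hd hd') hx
  have hpart := hS.service_cost_div_sub_le (h₁ := h₁) hμ₁ hμ₂ hh₂ hK hd hd'
  linear_combination h₀part + hpart

end BusyShift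

variable {μ₁ μ₂ K S d d' b c x Δ D : ℝ}

lemma le_of_le_one_step (hμ₁ : 0 < μ₁) (hμ₂ : 0 ≤ μ₂) (hc : c ≤ 0) (hS : 0 ≤ S)
    (hd : d = K * μ₁ + S * μ₂) (hd' : 0 < d') (hgap : d' ≤ d) (hgap' : d ≤ d' + μ₁)
    (hq : (K - 1) * μ₁ / d' < K * μ₁ / d)
    (hΔ : Δ ≤ (K * μ₁ / d - (K - 1) * μ₁ / d') * (x * c + b))
    (hD : D ≤ Δ + S * μ₂ / d * max ((x - d / μ₁) * c + b) 0
      + (K - 1) * μ₁ / d' * max ((x - d' / μ₁) * c + b) 0)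
    (hD₀ : 0 ≤ D) :
    D ≤ (x + 1 - d / μ₁) * c + b := by
  have hd0 : 0 < d := hd'.trans_le hgap
  have hp : K * μ₁ / d + S * μ₂ / d = 1 := by rw [← add_div, ← hd, div_self hd0.ne']
  have hp₁ : K * μ₁ / d * (d / μ₁) = K := by field_simp
  have hq₁ : (K - 1) * μ₁ / d' * (d' / μ₁) = K - 1 := by field_simp
  have hp₂ : 0 ≤ S * μ₂ / d := by positivity
  have hu : d' / μ₁ ≤ d / μ₁ := div_le_div_of_nonneg_right hgap hμ₁.le
  have hu' : d / μ₁ ≤ d' / μ₁ + 1 := by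
    rw [div_add_one hμ₁.ne']; exact div_le_div_of_nonneg_right hgap' hμ₁.le
  rcases le_or_gt 0 ((x - d' / μ₁) * c + b) with hB' | hB'
  · have hB : (x - d' / μ₁) * c + b ≤ (x - d / μ₁) * c + b := by nlinarith
    rw [max_eq_left hB', max_eq_left (hB'.trans hB)] at hD
    linear_combination hD + hΔ + (x * c + b - d / μ₁ * c) * hp + c * hp₁ - c * hq₁
  · rw [max_eq_right hB'.le, mul_zero, add_zero] at hD
    have hB : max ((x - d / μ₁) * c + b) 0 ≤ (d' / μ₁ - d / μ₁) * c :=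
      max_le (by linarith) (by nlinarith)
    have h₂ := mul_le_mul_of_nonneg_left hB hp₂
    have h₃ := mul_lt_mul_of_pos_left (by linarith : x * c + b < d' / μ₁ * c) (sub_pos.2 hq)
    have h₄ : c * (d' / μ₁ - d / μ₁ + 1) ≤ 0 := mul_nonpos_of_nonpos_of_nonneg hc (by linarith)
    have : D < 0 := by
      linear_combination hD + hΔ + h₂ + h₃ + h₄ + (d' / μ₁ * c - d / μ₁ * c) * hp
        + c * hp₁ - c * hq₁
    linarith

namespace ClearingSystem

variable {C₁ C₂ : ℕ} {μ₁ μ₂ h₀ h₁ h₂ : ℝ} {v : ℕ → ℕ → ℕ → ℝ}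

noncomputable def bound (C₁ C₂ : ℕ) (μ₁ μ₂ h₀ h₁ h₂ : ℝ) (i k ℓ : ℕ) : ℝ :=
  ((i : ℝ) - (((k : ℝ) - 1) + ((min ℓ C₂ : ℕ) : ℝ) * (μ₂ / μ₁))) *
      (h₀ / (C₁ : ℝ) * (1 / μ₁ - 1 / μ₂))
    + (h₁ / μ₁ - h₂ / μ₂)

def BoundedAt (C₁ C₂ : ℕ) (μ₁ μ₂ h₀ h₁ h₂ : ℝ) (v : ℕ → ℕ → ℕ → ℝ) (i : ℕ) : Prop :=
  ∀ k ℓ : ℕ, k + ℓ = C₁ → 1 ≤ k → 0 ≤ Dv v i k ℓ →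
    Dv v i k ℓ ≤ bound C₁ C₂ μ₁ μ₂ h₀ h₁ h₂ i k ℓ

lemma busyShift_min (hC₂ : 1 ≤ C₂) (ℓ : ℕ) :
    BusyShift ℓ (min ℓ C₂ : ℕ) (min (ℓ + 1) C₂ : ℕ) := by
  rcases lt_or_ge ℓ C₂ with h | h
  · left
    simp [min_eq_left h.le, min_eq_left (Nat.succ_le_of_lt h)]
  · right
    rw [min_eq_right h, min_eq_right (h.trans ℓ.le_succ)]
    exact ⟨by exact_mod_cast hC₂, by exact_mod_cast h, rfl⟩

lemma dRate_pos (hμ₁ : 0 < μ₁) (hμ₂ : 0 ≤ μ₂) {k : ℕ} (hk : 1 ≤ k) (ℓ : ℕ) :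
    0 < dRate C₂ μ₁ μ₂ k ℓ := by
  have : (1 : ℝ) ≤ k := by exact_mod_cast hk
  unfold dRate
  positivity

lemma dRate_succ_pos (hC₂ : 1 ≤ C₂) (hμ₁ : 0 ≤ μ₁) (hμ₂ : 0 < μ₂) (k ℓ : ℕ) :
    0 < dRate C₂ μ₁ μ₂ k (ℓ + 1) := by
  have : (1 : ℝ) ≤ (min (ℓ + 1) C₂ : ℕ) := by exact_mod_cast le_min (by omega) hC₂
  unfold dRate
  positivity

lemma div_dRate_add_div_dRate {k ℓ : ℕ} (hd : dRate C₂ μ₁ μ₂ k ℓ ≠ 0) :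
    (k : ℝ) * μ₁ / dRate C₂ μ₁ μ₂ k ℓ + ((min ℓ C₂ : ℕ) : ℝ) * μ₂ / dRate C₂ μ₁ μ₂ k ℓ = 1 := by
  rw [← add_div]
  exact div_self hd

lemma dRate_pred_succ {k : ℕ} (hk : 1 ≤ k) (ℓ : ℕ) :
    dRate C₂ μ₁ μ₂ (k - 1) (ℓ + 1) = ((k : ℝ) - 1) * μ₁ + ((min (ℓ + 1) C₂ : ℕ) : ℝ) * μ₂ := by
  rw [dRate, Nat.cast_pred hk]

lemma bound_eq (hμ₁ : μ₁ ≠ 0) (i k ℓ : ℕ) :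
    bound C₁ C₂ μ₁ μ₂ h₀ h₁ h₂ i k ℓ
      = ((i : ℝ) + 1 - dRate C₂ μ₁ μ₂ k ℓ / μ₁) * (h₀ / C₁ * (1 / μ₁ - 1 / μ₂))
        + (h₁ / μ₁ - h₂ / μ₂) := by
  unfold bound dRate
  field_simp
  ring

lemma Dv_succ_le (hC₂ : 1 ≤ C₂) (hμ₁ : 0 < μ₁) (hμ₂ : 0 < μ₂)
    (hv : IsValue C₁ C₂ μ₁ μ₂ h₀ h₁ h₂ v) {i k ℓ : ℕ} (hkl : k + ℓ = C₁) (hk : 1 ≤ k) :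
    Dv v (i + 1) k ℓ ≤
      (((i : ℝ) + 1) * h₀ + k * h₁ + ℓ * h₂) / dRate C₂ μ₁ μ₂ k ℓ
        - (((i : ℝ) + 1) * h₀ + ((k : ℝ) - 1) * h₁ + ((ℓ : ℝ) + 1) * h₂)
          / dRate C₂ μ₁ μ₂ (k - 1) (ℓ + 1)
        + ((min ℓ C₂ : ℕ) : ℝ) * μ₂ / dRate C₂ μ₁ μ₂ k ℓ * max (Dv v i k ℓ) 0
        + ((k : ℝ) - 1) * μ₁ / dRate C₂ μ₁ μ₂ (k - 1) (ℓ + 1)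
          * max (Dv v i (k - 1) (ℓ + 1)) 0 := by
  obtain ⟨-, -, hstep⟩ := hv
  have hd : 0 < dRate C₂ μ₁ μ₂ k ℓ := dRate_pos hμ₁ hμ₂.le hk ℓ
  have hd' : 0 < dRate C₂ μ₁ μ₂ (k - 1) (ℓ + 1) := dRate_succ_pos hC₂ hμ₁.le hμ₂ (k - 1) ℓ
  have hmin := mul_min_add_mul_min_sub_le (a := v i k ℓ) (a' := v i (k - 1) (ℓ + 1))
    (a'' := v i (k - 1 - 1) (ℓ + 1 + 1)) (w := v i (k + 1) (ℓ - 1))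
    (div_nonneg (by positivity) hd.le) (div_nonneg (by positivity) hd'.le)
    (div_dRate_add_div_dRate hd.ne') (div_dRate_add_div_dRate hd'.ne')
  rw [Dv, hstep i k ℓ hkl, hstep i (k - 1) (ℓ + 1) (by omega), Nat.sub_add_cancel hk,
    Nat.add_sub_cancel]
  simp only [Nat.cast_pred hk, Nat.cast_add_one] at hmin ⊢
  unfold Dv
  linarith

lemma Dv_zero_eq (hC₂ : 1 ≤ C₂) (hμ₁ : 0 < μ₁) (hμ₂ : 0 < μ₂)
    (hv : IsValue C₁ C₂ μ₁ μ₂ h₀ h₁ h₂ v) {k ℓ : ℕ} (hkl : k + ℓ ≤ C₁) (hk : 1 ≤ k) :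
    Dv v 0 k ℓ =
      ((k : ℝ) * h₁ + ℓ * h₂) / dRate C₂ μ₁ μ₂ k ℓ
        - (((k : ℝ) - 1) * h₁ + ((ℓ : ℝ) + 1) * h₂) / dRate C₂ μ₁ μ₂ (k - 1) (ℓ + 1)
        + ((min ℓ C₂ : ℕ) : ℝ) * μ₂ / dRate C₂ μ₁ μ₂ k ℓ * (v 0 k (ℓ - 1) - v 0 (k - 1) ℓ)
        + ((k : ℝ) - 1) * μ₁ / dRate C₂ μ₁ μ₂ (k - 1) (ℓ + 1) * Dv v 0 (k - 1) ℓ := by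
  obtain ⟨-, hzero, -⟩ := hv
  have hp := div_dRate_add_div_dRate (dRate_pos (C₂ := C₂) hμ₁ hμ₂.le hk ℓ).ne'
  have hq := div_dRate_add_div_dRate (dRate_succ_pos hC₂ hμ₁.le hμ₂ (k - 1) ℓ).ne'
  rw [Dv, hzero k ℓ hkl (by omega), hzero (k - 1) (ℓ + 1) (by omega) (by omega),
    Nat.add_sub_cancel]
  simp only [Nat.cast_pred hk, Nat.cast_add_one] at hq ⊢
  unfold Dv
  linear_combination v 0 (k - 1) ℓ * (hp - hq)

lemma Dv_zero_le (hC₂ : 1 ≤ C₂) (hμ₁ : 0 < μ₁) (hμ₂ : 0 < μ₂) (hh₂ : 0 ≤ h₂)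
    (hv : IsValue C₁ C₂ μ₁ μ₂ h₀ h₁ h₂ v) {k ℓ : ℕ} (hkl : k + ℓ ≤ C₁) (hk : 1 ≤ k) :
    Dv v 0 k ℓ ≤ h₁ / μ₁ - h₂ / μ₂ := by
  obtain ⟨n, hn⟩ : ∃ n, k + ℓ = n := ⟨_, rfl⟩
  induction n generalizing k ℓ with
  | zero => omega
  | succ n ih =>
    have hK : (1 : ℝ) ≤ k := by exact_mod_cast hk
    have hS := busyShift_min hC₂ ℓ
    have hd' := dRate_pred_succ (C₂ := C₂) (μ₁ := μ₁) (μ₂ := μ₂) hk ℓ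
    have hcost := hS.service_cost_div_sub_le (h₁ := h₁) (d := dRate C₂ μ₁ μ₂ k ℓ)
      hμ₁ hμ₂ hh₂ hK rfl hd'
    have hp := div_dRate_add_div_dRate (dRate_pos (C₂ := C₂) hμ₁ hμ₂.le hk ℓ).ne'
    have hleft : ((min ℓ C₂ : ℕ) : ℝ) * μ₂ / dRate C₂ μ₁ μ₂ k ℓ * (v 0 k (ℓ - 1) - v 0 (k - 1) ℓ)
        ≤ ((min ℓ C₂ : ℕ) : ℝ) * μ₂ / dRate C₂ μ₁ μ₂ k ℓ * (h₁ / μ₁ - h₂ / μ₂) := by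
      obtain rfl | hℓ := Nat.eq_zero_or_pos ℓ
      · simp
      · have := ih (k := k) (ℓ := ℓ - 1) (by omega) hk (by omega)
        rw [Dv, Nat.sub_add_cancel hℓ] at this
        exact mul_le_mul_of_nonneg_left this
          (div_nonneg (by positivity) (dRate_pos hμ₁ hμ₂.le hk ℓ).le)
    have hright : ((k : ℝ) - 1) * μ₁ / dRate C₂ μ₁ μ₂ (k - 1) (ℓ + 1) * Dv v 0 (k - 1) ℓ
        ≤ ((k : ℝ) - 1) * μ₁ / dRate C₂ μ₁ μ₂ (k - 1) (ℓ + 1) * (h₁ / μ₁ - h₂ / μ₂) := by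
      obtain rfl | hk₂ := eq_or_lt_of_le hk
      · simp
      · exact mul_le_mul_of_nonneg_left (ih (by omega) (by omega) (by omega))
          (div_nonneg (mul_nonneg (by linarith) hμ₁.le) (dRate_succ_pos hC₂ hμ₁.le hμ₂ _ ℓ).le)
    rw [Dv_zero_eq hC₂ hμ₁ hμ₂ hv hkl hk]
    linear_combination hcost + hleft + hright + (h₁ / μ₁ - h₂ / μ₂) * hp

lemma boundedAt_zero (hC₂ : 1 ≤ C₂) (hμ₁ : 0 < μ₁) (hμ₂ : 0 < μ₂) (hμ : μ₂ < μ₁)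
    (hh₀ : 0 ≤ h₀) (hh₂ : 0 ≤ h₂) (hv : IsValue C₁ C₂ μ₁ μ₂ h₀ h₁ h₂ v) :
    BoundedAt C₁ C₂ μ₁ μ₂ h₀ h₁ h₂ v 0 := by
  intro k ℓ hkl hk _
  have hK : (1 : ℝ) ≤ k := by exact_mod_cast hk
  have hy : 0 ≤ ((k : ℝ) - 1) + ((min ℓ C₂ : ℕ) : ℝ) * (μ₂ / μ₁) := by
    have : 0 ≤ ((min ℓ C₂ : ℕ) : ℝ) * (μ₂ / μ₁) := by positivity
    linarith
  have hc := mul_one_div_sub_one_div_nonpos hμ₂ hμ hh₀ (Nat.cast_nonneg C₁)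
  have := mul_nonneg_of_nonpos_of_nonpos (neg_nonpos.2 hy) hc
  rw [bound, Nat.cast_zero, zero_sub]
  linarith [Dv_zero_le hC₂ hμ₁ hμ₂ hh₂ hv hkl.le hk]

lemma BoundedAt.max_Dv_le {i : ℕ} (h : BoundedAt C₁ C₂ μ₁ μ₂ h₀ h₁ h₂ v i) {k ℓ : ℕ}
    (hkl : k + ℓ = C₁) (hk : 1 ≤ k) :
    max (Dv v i k ℓ) 0 ≤ max (bound C₁ C₂ μ₁ μ₂ h₀ h₁ h₂ i k ℓ) 0 := by
  rcases le_or_gt 0 (Dv v i k ℓ) with hD | hD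
  · exact max_le_max_right 0 (h k ℓ hkl hk hD)
  · rw [max_eq_right hD.le]
    exact le_max_right _ _

lemma boundedAt_succ (hC₂ : 1 ≤ C₂) (hμ₁ : 0 < μ₁) (hμ₂ : 0 < μ₂) (hμ : μ₂ < μ₁)
    (hh₀ : 0 ≤ h₀) (hh₂ : 0 ≤ h₂) (hv : IsValue C₁ C₂ μ₁ μ₂ h₀ h₁ h₂ v) {i : ℕ}
    (h : BoundedAt C₁ C₂ μ₁ μ₂ h₀ h₁ h₂ v i) : BoundedAt C₁ C₂ μ₁ μ₂ h₀ h₁ h₂ v (i + 1) := by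
  intro k ℓ hkl hk hD
  have hK : (1 : ℝ) ≤ k := by exact_mod_cast hk
  have hS := busyShift_min hC₂ ℓ
  have hd : dRate C₂ μ₁ μ₂ k ℓ = k * μ₁ + ((min ℓ C₂ : ℕ) : ℝ) * μ₂ := rfl
  have hd' := dRate_pred_succ (C₂ := C₂) (μ₁ := μ₁) (μ₂ := μ₂) hk ℓ
  have hd'₀ := hS.rate_pos' hμ₁ hμ₂ hK hd'
  have hC₁ : (C₁ : ℝ) = k + ℓ := by rw [← hkl, Nat.cast_add]
  have hself := mul_le_mul_of_nonneg_left (h.max_Dv_le hkl hk)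
    (div_nonneg (by positivity) (dRate_pos hμ₁ hμ₂.le hk ℓ).le :
      0 ≤ ((min ℓ C₂ : ℕ) : ℝ) * μ₂ / dRate C₂ μ₁ μ₂ k ℓ)
  have hnext : ((k : ℝ) - 1) * μ₁ / dRate C₂ μ₁ μ₂ (k - 1) (ℓ + 1)
        * max (Dv v i (k - 1) (ℓ + 1)) 0
      ≤ ((k : ℝ) - 1) * μ₁ / dRate C₂ μ₁ μ₂ (k - 1) (ℓ + 1)
        * max (bound C₁ C₂ μ₁ μ₂ h₀ h₁ h₂ i (k - 1) (ℓ + 1)) 0 := by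
    obtain rfl | hk₂ := eq_or_lt_of_le hk
    · simp -- the vanishing coefficient hides the junk value `Dv v i 0 (ℓ + 1)`
    · exact mul_le_mul_of_nonneg_left (h.max_Dv_le (by omega) (by omega))
        (div_nonneg (mul_nonneg (by linarith) hμ₁.le) hd'₀.le)
  have hstep := Dv_succ_le hC₂ hμ₁ hμ₂ hv (i := i) hkl hk
  simp only [bound_eq hμ₁.ne', hC₁] at hself hnext ⊢
  push_cast
  refine le_of_le_one_step hμ₁ hμ₂.le (mul_one_div_sub_one_div_nonpos hμ₂ hμ hh₀ (by positivity))
    hS.nonneg hd hd'₀ (hS.rate_lt hμ₁ hμ hd hd').le (hS.rate_le_add hμ₂ hd hd')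
    (hS.div_lt_div hμ₁ hμ₂ hK hd hd')
    (hS.cost_div_sub_le hμ₁ hμ₂ hh₀ hh₂ hK hd hd' (by positivity)) (by linarith) hD

end ClearingSystem

theorem stmt14_general
    (C₁ C₂ : ℕ) (hC₂pos : 1 ≤ C₂)
    (μ₁ μ₂ h₀ h₁ h₂ : ℝ)
    (hμ₁ : 0 < μ₁) (hμ₂ : 0 < μ₂)
    (hh₀ : 0 < h₀) (hh₂ : 0 < h₂)
    (v : ℕ → ℕ → ℕ → ℝ) (hv : IsValue C₁ C₂ μ₁ μ₂ h₀ h₁ h₂ v)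
    (hμ : μ₂ < μ₁) :
    ∀ i k ℓ : ℕ, k + ℓ = C₁ → 1 ≤ k → 0 ≤ Dv v i k ℓ →
      Dv v i k ℓ ≤
        ((i : ℝ) - (((k : ℝ) - 1) + ((min ℓ C₂ : ℕ) : ℝ) * (μ₂ / μ₁))) *
            (h₀ / (C₁ : ℝ) * (1 / μ₁ - 1 / μ₂))
          + (h₁ / μ₁ - h₂ / μ₂) := by
  intro i
  induction i with
  | zero => exact ClearingSystem.boundedAt_zero hC₂pos hμ₁ hμ₂ hμ hh₀.le hh₂.le hv
  | succ i ih => exact ClearingSystem.boundedAt_succ hC₂pos hμ₁ hμ₂ hμ hh₀.le hh₂.le hv ih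

theorem stmt14
    (C₁ C₂ : ℕ) (hC₂pos : 1 ≤ C₂) (hC : C₂ < C₁)
    (μ₁ μ₂ h₀ h₁ h₂ : ℝ)
    (hμ₁ : 0 < μ₁) (hμ₂ : 0 < μ₂)
    (hh₀ : 0 < h₀) (hh₁ : 0 < h₁) (hh₂ : 0 < h₂)
    (v : ℕ → ℕ → ℕ → ℝ) (hv : IsValue C₁ C₂ μ₁ μ₂ h₀ h₁ h₂ v)
    (hμ : μ₂ < μ₁) :
    ∀ i k ℓ : ℕ, k + ℓ = C₁ → 1 ≤ k → 0 ≤ Dv v i k ℓ →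
      Dv v i k ℓ ≤
        ((i : ℝ) - (((k : ℝ) - 1) + ((min ℓ C₂ : ℕ) : ℝ) * (μ₂ / μ₁))) *
            (h₀ / (C₁ : ℝ) * (1 / μ₁ - 1 / μ₂))
          + (h₁ / μ₁ - h₂ / μ₂) :=
  stmt14_general C₁ C₂ hC₂pos μ₁ μ₂ h₀ h₁ h₂ hμ₁ hμ₂ hh₀ hh₂ v hv hμ
end

section
/- Assume μ₁ < μ₂ and h₁/μ₁ ≤ h₂/μ₂. Then for every (i,k,ℓ) ∈ X̃_diff with ℓ < C₂, if D(i,k,ℓ) ≤ 0 then D(i,k,ℓ) ≥ (i − z_ℓ)·c + b. -/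
-- The coupling of the Bellman equations at `(k,ℓ)` and `(k−1,ℓ+1)`: `(p,q)` and `(p',q')` are
-- their transition probabilities.
theorem weighted_min_sub_weighted_min_ge {p q p' q' A B P Q : ℝ} (hpq : p + q = 1)
    (hpq' : p' + q' = 1) (hq : 0 ≤ q) (hp' : 0 ≤ p') :
    p' * min (A - B) 0 + q * min (P - A) 0 ≤
      (p * min A B + q * min P A) - (p' * min B Q + q' * min A B) := by
  have hAB : min A B = B + min (A - B) 0 := by
    rw [← min_add_add_left]; simp
  have hPA : min P A = A + min (P - A) 0 := by
    rw [← min_add_add_left]; simp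
  have hA : B + min (A - B) 0 ≤ A := by linarith [min_le_left (A - B) 0]
  have hBQ : min B Q ≤ B := min_le_left B Q
  obtain rfl : p = 1 - q := by linarith
  obtain rfl : q' = 1 - p' := by linarith
  rw [hAB, hPA]
  linarith [mul_le_mul_of_nonneg_left hA hq, mul_le_mul_of_nonneg_left hBQ hp']

theorem le_of_le_add_mul_min_sub {t tl tm a e x : ℝ} (ha : 0 ≤ a) (he : 0 ≤ e) (hae : a + e < 1)
    (hl : tl ≤ t) (hm : tm ≤ t) (hx : t + a * (min tl 0 - tl) + e * (min tm 0 - tm) ≤ x)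
    (hx0 : x ≤ 0) : t ≤ x := by
  rcases le_or_gt t 0 with ht | ht
  · rwa [min_eq_left (hl.trans ht), min_eq_left (hm.trans ht), sub_self, sub_self, mul_zero,
      mul_zero, add_zero, add_zero] at hx
  · have hneg : ∀ s ≤ t, -t ≤ min s 0 - s := fun s hs =>
      le_sub_iff_add_le.2 (le_min (by linarith) (by linarith))
    nlinarith [mul_le_mul_of_nonneg_left (hneg tl hl) ha, mul_le_mul_of_nonneg_left (hneg tm hm) he]

theorem min_zero_le_min_zero {t x : ℝ} (h : x ≤ 0 → t ≤ x) : min t 0 ≤ min x 0 := by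
  rcases le_or_gt x 0 with hx | hx
  · exact (min_le_left t 0).trans ((h hx).trans (le_min le_rfl hx))
  · rw [min_eq_right hx.le]; exact min_le_right t 0

/-- The bound `(i − z_ℓ)·c + b` of the paper, as a function of real `i`, `k`, `ℓ`. -/
noncomputable def diffBound (C μ₁ μ₂ h₀ h₁ h₂ i k ℓ : ℝ) : ℝ :=
  (i - ((k - 1) / (μ₂ / μ₁) + ℓ)) * (h₀ / C * (1 / μ₁ - 1 / μ₂)) + (h₁ / μ₁ - h₂ / μ₂)

section diffBound

variable {μ₁ μ₂ h₀ h₁ h₂ K L I : ℝ}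

theorem diffBound_coeff_nonneg {C : ℝ} (hC : 0 ≤ C) (hμ₁ : 0 < μ₁) (hμ : μ₁ ≤ μ₂)
    (hh₀ : 0 ≤ h₀) : 0 ≤ h₀ / C * (1 / μ₁ - 1 / μ₂) :=
  mul_nonneg (div_nonneg hh₀ hC) (sub_nonneg.2 (one_div_le_one_div_of_le hμ₁ hμ))

theorem diffBound_succ_eq (C : ℝ) :
    diffBound C μ₁ μ₂ h₀ h₁ h₂ (I + 1) K L =
      diffBound C μ₁ μ₂ h₀ h₁ h₂ I K L + h₀ / C * (1 / μ₁ - 1 / μ₂) := by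
  unfold diffBound; ring

theorem diffBound_succ_eq_transfer (C : ℝ) (hμ₁ : 0 < μ₁) (hμ₂ : 0 < μ₂) :
    diffBound C μ₁ μ₂ h₀ h₁ h₂ (I + 1) K L =
      diffBound C μ₁ μ₂ h₀ h₁ h₂ I (K + 1) (L - 1) + h₀ / C * (1 / μ₁ - 1 / μ₂) * (μ₁ / μ₂) := by
  unfold diffBound; field_simp; ring

theorem transfer_weights_lt_one (hμ₁ : 0 < μ₁) (hμ₂ : 0 < μ₂) (hK : 1 ≤ K) (hL : 0 ≤ L) :
    (K - 1) * μ₁ / ((K - 1) * μ₁ + (L + 1) * μ₂) + L * μ₂ / (K * μ₁ + L * μ₂) < 1 := by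
  have hd : 0 < K * μ₁ + L * μ₂ := by positivity
  have hd' : 0 < (K - 1) * μ₁ + (L + 1) * μ₂ := by nlinarith
  rw [div_add_div _ _ hd'.ne' hd.ne', div_lt_one (mul_pos hd' hd)]
  nlinarith [mul_pos (mul_pos hμ₁ hμ₂) (show 0 < K + L by linarith)]

theorem cost_rate_sub_eq_diffBound (hμ₁ : 0 < μ₁) (hμ₂ : 0 < μ₂) (hK : 1 ≤ K) (hL : 0 ≤ L) :
    ((I + 1) * h₀ + K * h₁ + L * h₂) / (K * μ₁ + L * μ₂)
        - ((I + 1) * h₀ + (K - 1) * h₁ + (L + 1) * h₂) / ((K - 1) * μ₁ + (L + 1) * μ₂) =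
      diffBound (K + L) μ₁ μ₂ h₀ h₁ h₂ (I + 1) K L
        - (K - 1) * μ₁ / ((K - 1) * μ₁ + (L + 1) * μ₂) * diffBound (K + L) μ₁ μ₂ h₀ h₁ h₂ I K L
        - L * μ₂ / (K * μ₁ + L * μ₂) * diffBound (K + L) μ₁ μ₂ h₀ h₁ h₂ I (K + 1) (L - 1) := by
  have hd' : μ₁ * (K - 1) + μ₂ * (L + 1) ≠ 0 := by nlinarith
  have hKL : 0 < K + L := by linarith
  unfold diffBound
  field_simp
  ring

end diffBound

theorem dRate_of_le {C₂ : ℕ} {μ₁ μ₂ : ℝ} {k ℓ : ℕ} (h : ℓ ≤ C₂) :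
    dRate C₂ μ₁ μ₂ k ℓ = k * μ₁ + ℓ * μ₂ := by
  rw [dRate, min_eq_left h]

namespace IsValue

variable {C₁ C₂ : ℕ} {μ₁ μ₂ h₀ h₁ h₂ : ℝ} {v : ℕ → ℕ → ℕ → ℝ}

theorem value_zero (hv : IsValue C₁ C₂ μ₁ μ₂ h₀ h₁ h₂ v) (hμ₁ : 0 < μ₁) (hμ₂ : 0 < μ₂)
    {k ℓ : ℕ} (h : k + ℓ ≤ C₁) (hℓ : ℓ ≤ C₂) :
    v 0 k ℓ = k * (h₁ / μ₁) + ℓ * (h₂ / μ₂) := by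
  induction hn : k + ℓ using Nat.strong_induction_on generalizing k ℓ with
  | _ n ih =>
  by_cases h0 : k = 0 ∧ ℓ = 0
  · obtain ⟨rfl, rfl⟩ := h0
    simpa using hv.1
  have hd : 0 < (k : ℝ) * μ₁ + ℓ * μ₂ := by
    rcases Nat.eq_zero_or_pos k with rfl | hk
    · have hℓ₀ : 0 < ℓ := by omega
      simp only [Nat.cast_zero, zero_mul, zero_add]
      positivity
    · positivity
  have hprev₁ : (k : ℝ) * μ₁ * v 0 (k - 1) ℓ
      = k * μ₁ * ((k - 1 : ℝ) * (h₁ / μ₁) + ℓ * (h₂ / μ₂)) := by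
    rcases Nat.eq_zero_or_pos k with rfl | hk
    · simp
    · rw [ih (k - 1 + ℓ) (by omega) (by omega) hℓ rfl, Nat.cast_sub hk, Nat.cast_one]
  have hprev₂ : (ℓ : ℝ) * μ₂ * v 0 k (ℓ - 1)
      = ℓ * μ₂ * (k * (h₁ / μ₁) + (ℓ - 1 : ℝ) * (h₂ / μ₂)) := by
    rcases Nat.eq_zero_or_pos ℓ with rfl | hl
    · simp
    · rw [ih (k + (ℓ - 1)) (by omega) (by omega) (by omega) rfl, Nat.cast_sub hl, Nat.cast_one]
  rw [hv.2.1 k ℓ h h0, dRate_of_le hℓ, min_eq_left hℓ, div_mul_eq_mul_div, div_mul_eq_mul_div,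
    hprev₁, hprev₂]
  field_simp
  ring

theorem Dv_zero (hv : IsValue C₁ C₂ μ₁ μ₂ h₀ h₁ h₂ v) (hμ₁ : 0 < μ₁) (hμ₂ : 0 < μ₂)
    {k ℓ : ℕ} (h : k + ℓ ≤ C₁) (hk : 1 ≤ k) (hℓ : ℓ < C₂) :
    Dv v 0 k ℓ = h₁ / μ₁ - h₂ / μ₂ := by
  rw [Dv, hv.value_zero hμ₁ hμ₂ h hℓ.le, hv.value_zero hμ₁ hμ₂ (by omega) hℓ, Nat.cast_sub hk]
  push_cast
  ring

theorem Dv_succ_ge (hv : IsValue C₁ C₂ μ₁ μ₂ h₀ h₁ h₂ v) (hμ₁ : 0 < μ₁) (hμ₂ : 0 < μ₂)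
    {i k ℓ : ℕ} (hkℓ : k + ℓ = C₁) (hk : 1 ≤ k) (hℓ : ℓ < C₂) :
    (((i : ℝ) + 1) * h₀ + k * h₁ + ℓ * h₂) / (k * μ₁ + ℓ * μ₂)
        - (((i : ℝ) + 1) * h₀ + (k - 1) * h₁ + (ℓ + 1) * h₂) / ((k - 1) * μ₁ + (ℓ + 1) * μ₂)
        + (k - 1) * μ₁ / ((k - 1) * μ₁ + (ℓ + 1) * μ₂) * min (Dv v i k ℓ) 0
        + ℓ * μ₂ / (k * μ₁ + ℓ * μ₂) * min (v i (k + 1) (ℓ - 1) - v i k ℓ) 0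
      ≤ Dv v (i + 1) k ℓ := by
  have hK : (1 : ℝ) ≤ k := by exact_mod_cast hk
  have hd : 0 < (k : ℝ) * μ₁ + ℓ * μ₂ := by positivity
  have hd' : 0 < ((k : ℝ) - 1) * μ₁ + (ℓ + 1) * μ₂ := by nlinarith
  have e₁ := hv.2.2 i k ℓ hkℓ
  have e₂ := hv.2.2 i (k - 1) (ℓ + 1) (by omega)
  rw [dRate_of_le hℓ.le, min_eq_left hℓ.le] at e₁
  rw [dRate_of_le hℓ, min_eq_left (show ℓ + 1 ≤ C₂ from hℓ), Nat.sub_add_cancel hk,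
    Nat.add_sub_cancel, Nat.cast_sub hk] at e₂
  push_cast at e₂
  have hw := weighted_min_sub_weighted_min_ge (A := v i k ℓ) (B := v i (k - 1) (ℓ + 1))
    (P := v i (k + 1) (ℓ - 1)) (Q := v i (k - 1 - 1) (ℓ + 1 + 1))
    (by rw [← add_div, div_self hd.ne']) (by rw [← add_div, div_self hd'.ne'])
    (div_nonneg (by positivity) hd.le) (div_nonneg (by nlinarith) hd'.le)
  simp only [Dv]
  rw [e₁, e₂]
  linarith

theorem diffBound_le_Dv_succ (hv : IsValue C₁ C₂ μ₁ μ₂ h₀ h₁ h₂ v) (hμ₁ : 0 < μ₁)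
    (hμ : μ₁ < μ₂) (hh₀ : 0 ≤ h₀) {i : ℕ}
    (ih : ∀ k ℓ : ℕ, k + ℓ = C₁ → 1 ≤ k → ℓ < C₂ → Dv v i k ℓ ≤ 0 →
      diffBound C₁ μ₁ μ₂ h₀ h₁ h₂ i k ℓ ≤ Dv v i k ℓ)
    {k ℓ : ℕ} (hkℓ : k + ℓ = C₁) (hk : 1 ≤ k) (hℓ : ℓ < C₂) (hD : Dv v (i + 1) k ℓ ≤ 0) :
    diffBound C₁ μ₁ μ₂ h₀ h₁ h₂ (i + 1 : ℕ) k ℓ ≤ Dv v (i + 1) k ℓ := by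
  have hμ₂ : 0 < μ₂ := hμ₁.trans hμ
  have hK : (1 : ℝ) ≤ k := by exact_mod_cast hk
  have hL : (0 : ℝ) ≤ ℓ := Nat.cast_nonneg ℓ
  subst hkℓ
  push_cast at ih ⊢
  have hstep := hv.Dv_succ_ge hμ₁ hμ₂ (i := i) rfl hk hℓ
  rw [cost_rate_sub_eq_diffBound hμ₁ hμ₂ hK hL] at hstep
  set T := diffBound ((k : ℝ) + ℓ) μ₁ μ₂ h₀ h₁ h₂
  set a := ((k : ℝ) - 1) * μ₁ / ((k - 1) * μ₁ + (ℓ + 1) * μ₂)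
  set e := (ℓ : ℝ) * μ₂ / (k * μ₁ + ℓ * μ₂)
  have hc := diffBound_coeff_nonneg (C := (k : ℝ) + ℓ) (by positivity) hμ₁ hμ.le hh₀
  have ha : 0 ≤ a := div_nonneg (by nlinarith) (by nlinarith)
  have he : 0 ≤ e := by positivity
  have hl : min (T i k ℓ) 0 ≤ min (Dv v i k ℓ) 0 := min_zero_le_min_zero (ih k ℓ rfl hk hℓ)
  have hm : e * min (T i (k + 1) (ℓ - 1)) 0 ≤ e * min (v i (k + 1) (ℓ - 1) - v i k ℓ) 0 := by
    rcases Nat.eq_zero_or_pos ℓ with rfl | hℓ₀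
    · simp [e]
    · have := min_zero_le_min_zero (ih (k + 1) (ℓ - 1) (by omega) (by omega) (by omega))
      rw [Dv, Nat.add_sub_cancel, Nat.sub_add_cancel hℓ₀, Nat.cast_sub hℓ₀] at this
      push_cast at this
      exact mul_le_mul_of_nonneg_left this he
  refine le_of_le_add_mul_min_sub (tl := T i k ℓ) (tm := T i (k + 1) (ℓ - 1)) ha he
    (transfer_weights_lt_one hμ₁ hμ₂ hK hL) ?_ ?_ ?_ hD
  · exact (le_add_of_nonneg_right hc).trans (diffBound_succ_eq _).ge
  · exact (le_add_of_nonneg_right (mul_nonneg hc (div_nonneg hμ₁.le hμ₂.le))).trans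
      (diffBound_succ_eq_transfer _ hμ₁ hμ₂).ge
  · linarith [mul_le_mul_of_nonneg_left hl ha]

end IsValue

theorem stmt16_general
    (C₁ C₂ : ℕ)
    (μ₁ μ₂ h₀ h₁ h₂ : ℝ)
    (hμ₁ : 0 < μ₁) (hμ₂ : 0 < μ₂)
    (hh₀ : 0 < h₀)
    (v : ℕ → ℕ → ℕ → ℝ) (hv : IsValue C₁ C₂ μ₁ μ₂ h₀ h₁ h₂ v)
    (hμ : μ₁ < μ₂) :
    ∀ i k ℓ : ℕ, k + ℓ = C₁ → 1 ≤ k → ℓ < C₂ → Dv v i k ℓ ≤ 0 →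
      ((i : ℝ) - (((k : ℝ) - 1) / (μ₂ / μ₁) + (ℓ : ℝ))) *
            (h₀ / (C₁ : ℝ) * (1 / μ₁ - 1 / μ₂))
          + (h₁ / μ₁ - h₂ / μ₂) ≤ Dv v i k ℓ := by
  intro i
  induction i with
  | zero =>
    intro k ℓ hkℓ hk hℓ _
    have hK : (1 : ℝ) ≤ k := by exact_mod_cast hk
    have hz : 0 ≤ ((k : ℝ) - 1) / (μ₂ / μ₁) + ℓ := by positivity
    have hc := diffBound_coeff_nonneg (Nat.cast_nonneg C₁) hμ₁ hμ.le hh₀.le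
    rw [hv.Dv_zero hμ₁ hμ₂ hkℓ.le hk hℓ]
    push_cast
    nlinarith
  | succ i ih =>
    exact fun k ℓ hkℓ hk hℓ hD => hv.diffBound_le_Dv_succ hμ₁ hμ hh₀.le ih hkℓ hk hℓ hD

theorem stmt16
    (C₁ C₂ : ℕ) (hC₂pos : 1 ≤ C₂) (hC : C₂ < C₁)
    (μ₁ μ₂ h₀ h₁ h₂ : ℝ)
    (hμ₁ : 0 < μ₁) (hμ₂ : 0 < μ₂)
    (hh₀ : 0 < h₀) (hh₁ : 0 < h₁) (hh₂ : 0 < h₂)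
    (v : ℕ → ℕ → ℕ → ℝ) (hv : IsValue C₁ C₂ μ₁ μ₂ h₀ h₁ h₂ v)
    (hμ : μ₁ < μ₂) (hcost : h₁ / μ₁ ≤ h₂ / μ₂) :
    ∀ i k ℓ : ℕ, k + ℓ = C₁ → 1 ≤ k → ℓ < C₂ → Dv v i k ℓ ≤ 0 →
      ((i : ℝ) - (((k : ℝ) - 1) / (μ₂ / μ₁) + (ℓ : ℝ))) *
            (h₀ / (C₁ : ℝ) * (1 / μ₁ - 1 / μ₂))
          + (h₁ / μ₁ - h₂ / μ₂) ≤ Dv v i k ℓ :=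
  stmt16_general C₁ C₂ μ₁ μ₂ h₀ h₁ h₂ hμ₁ hμ₂ hh₀ v hv hμ
end
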